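/- arXiv:1205.0348 — 2 statements merged into one kernel-verified Lean document; each statement's English description precedes it below -/
import Mathlib

section
/- For every ε > 0 there exist real numbers 0 < a < b and a smooth function f : (0,∞) → [0,1] such that f(ρ) = 1 for all ρ ≤ a, f(ρ) = 0 for all ρ ≥ b, and ∫₀^∞ f'(ρ)² ρ dρ < ε. -/
/-!
Take the logarithmic cutoff `f ρ = ψ (1 - log ρ / L)`, where `ψ` is a smooth transition from `0`
to `1`; it equals `1` on `(0, 1]` and `0` on `[exp L, ∞)`. The substitution `t = 1 - log ρ / L`
turns `∫ f'(ρ)² ρ dρ` into `(∫₀¹ ψ'(t)² dt) / L`, which is below `ε` once `L` is large.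
-/

open MeasureTheory Set Real

namespace Real.smoothTransition

theorem deriv_of_nonpos {x : ℝ} (hx : x ≤ 0) : deriv smoothTransition x = 0 :=
  IsLocalMin.deriv_eq_zero <| .of_forall fun y => by
    simpa only [zero_of_nonpos hx] using nonneg y

theorem deriv_of_one_le {x : ℝ} (hx : 1 ≤ x) : deriv smoothTransition x = 0 :=
  IsLocalMax.deriv_eq_zero <| .of_forall fun y => by
    simpa only [one_of_one_le hx] using le_one y

theorem deriv_eq_zero_of_notMem_Ioo {x : ℝ} (hx : x ∉ Ioo 0 1) :
    deriv smoothTransition x = 0 := by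
  rcases le_or_gt x 0 with h | h
  · exact deriv_of_nonpos h
  · exact deriv_of_one_le (not_lt.1 fun h' => hx ⟨h, h'⟩)

theorem continuous_deriv : Continuous (deriv smoothTransition) :=
  (smoothTransition.contDiff (n := 1)).continuous_deriv le_rfl

theorem hasDerivAt (x : ℝ) : HasDerivAt smoothTransition (deriv smoothTransition x) x :=
  ((smoothTransition.contDiff (n := 1)).differentiable one_ne_zero x).hasDerivAt

end Real.smoothTransition

noncomputable def logCutoff (L ρ : ℝ) : ℝ := smoothTransition (1 - log ρ / L)

section logCutoff

variable {L ρ : ℝ}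

theorem logCutoff_mem_Icc (L ρ : ℝ) : logCutoff L ρ ∈ Icc 0 1 :=
  ⟨smoothTransition.nonneg _, smoothTransition.le_one _⟩

theorem logCutoff_eq_one (hL : 0 < L) (hρ : 0 < ρ) (h : ρ ≤ 1) : logCutoff L ρ = 1 :=
  smoothTransition.one_of_one_le <| by
    have := div_nonpos_of_nonpos_of_nonneg (log_nonpos hρ.le h) hL.le
    linarith

theorem logCutoff_eq_zero (hL : 0 < L) (h : exp L ≤ ρ) : logCutoff L ρ = 0 :=
  smoothTransition.zero_of_nonpos <| by
    rw [sub_nonpos, one_le_div hL]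
    exact (le_log_iff_exp_le ((exp_pos L).trans_le h)).2 h

theorem contDiffOn_logCutoff {n : ℕ∞} (L : ℝ) : ContDiffOn ℝ n (logCutoff L) (Ioi 0) :=
  smoothTransition.contDiff.comp_contDiffOn <|
    contDiffOn_const.sub <| (contDiffOn_log.mono fun _ hx => ne_of_gt hx).div_const L

theorem hasDerivAt_logCutoff (L : ℝ) (hρ : ρ ≠ 0) :
    HasDerivAt (logCutoff L) (deriv smoothTransition (1 - log ρ / L) * -(ρ⁻¹ / L)) ρ :=
  (smoothTransition.hasDerivAt _).comp ρ (((hasDerivAt_log hρ).div_const L).const_sub 1)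

theorem deriv_logCutoff_eq_zero (hL : 0 < L) (hρ : 0 < ρ) (h : ρ ∉ Ioo 1 (exp L)) :
    deriv (logCutoff L) ρ = 0 := by
  rw [(hasDerivAt_logCutoff L hρ.ne').deriv,
    smoothTransition.deriv_eq_zero_of_notMem_Ioo, zero_mul]
  rintro ⟨h0, h1⟩
  refine h ⟨(log_pos_iff hρ.le).1 ?_, (log_lt_iff_lt_exp hρ).1 ?_⟩
  · have : 0 < log ρ / L := by linarith
    exact (div_pos_iff_of_pos_right hL).1 this
  · have : log ρ / L < 1 := by linarith
    exact (div_lt_one hL).1 this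

theorem integral_deriv_logCutoff_sq_mul (hL : 0 < L) :
    ∫ ρ in Ioi 0, deriv (logCutoff L) ρ ^ 2 * ρ =
      (∫ t in 0..1, deriv smoothTransition t ^ 2) / L := by
  have h1 : (1 : ℝ) ≤ exp L := one_le_exp hL.le
  have hsupp : ∫ ρ in Ioi 0, deriv (logCutoff L) ρ ^ 2 * ρ =
      ∫ ρ in 1..exp L, deriv (logCutoff L) ρ ^ 2 * ρ := by
    rw [intervalIntegral.integral_of_le h1]
    refine setIntegral_eq_of_subset_of_ae_sdiff_eq_zero measurableSet_Ioi.nullMeasurableSet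
      (fun ρ hρ => zero_lt_one.trans hρ.1) (.of_forall fun ρ ⟨hρ, hρ'⟩ => ?_)
    rw [deriv_logCutoff_eq_zero hL hρ fun h => hρ' (Ioo_subset_Ioc_self h)]
    ring
  have hpos : ∀ ρ ∈ uIcc 1 (exp L), 0 < ρ := by
    rw [uIcc_of_le h1]
    exact fun ρ hρ => zero_lt_one.trans_le hρ.1
  have hsubst := intervalIntegral.integral_comp_mul_deriv (a := 1) (b := exp L)
    (f := fun ρ => 1 - log ρ / L) (f' := fun ρ => -(ρ⁻¹ / L))
    (g := fun t => deriv smoothTransition t ^ 2)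
    (fun ρ hρ => ((hasDerivAt_log (hpos ρ hρ).ne').div_const L).const_sub 1)
    ((continuousOn_inv₀.mono fun ρ hρ => (hpos ρ hρ).ne').div_const L).neg
    (smoothTransition.continuous_deriv.pow 2)
  simp only [Function.comp_apply, log_one, log_exp, zero_div, sub_zero, div_self hL.ne',
    sub_self] at hsubst
  rw [hsupp]
  calc ∫ ρ in 1..exp L, deriv (logCutoff L) ρ ^ 2 * ρ
      = ∫ ρ in 1..exp L, -L⁻¹ * (deriv smoothTransition (1 - log ρ / L) ^ 2 * -(ρ⁻¹ / L)) := by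
        refine intervalIntegral.integral_congr fun ρ hρ => ?_
        rw [(hasDerivAt_logCutoff L (hpos ρ hρ).ne').deriv]
        field_simp
    _ = (∫ t in 0..1, deriv smoothTransition t ^ 2) / L := by
        rw [intervalIntegral.integral_const_mul, hsubst, intervalIntegral.integral_symm]
        ring

end logCutoff

/-- For every `ε > 0` there exist `0 < a < b` and a smooth function
`f : (0,∞) → [0,1]` with `f ≡ 1` on `(0,a]`, `f ≡ 0` on `[b,∞)`, and
`∫₀^∞ f'(ρ)² ρ dρ < ε`. -/
theorem statement12 (ε : ℝ) (hε : 0 < ε) :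
    ∃ a b : ℝ, 0 < a ∧ a < b ∧
      ∃ f : ℝ → ℝ,
        ContDiffOn ℝ (⊤ : ℕ∞) f (Set.Ioi 0) ∧
        (∀ ρ ∈ Set.Ioi (0:ℝ), f ρ ∈ Set.Icc (0:ℝ) 1) ∧
        (∀ ρ ∈ Set.Ioi (0:ℝ), ρ ≤ a → f ρ = 1) ∧
        (∀ ρ ∈ Set.Ioi (0:ℝ), b ≤ ρ → f ρ = 0) ∧
        (∫ ρ in Set.Ioi (0:ℝ), (deriv f ρ) ^ 2 * ρ) < ε := by
  set E := ∫ t in 0..1, deriv smoothTransition t ^ 2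
  have hE : 0 ≤ E := intervalIntegral.integral_nonneg zero_le_one fun t _ => sq_nonneg _
  set L := E / ε + 1
  have hL : 0 < L := by positivity
  refine ⟨1, exp L, one_pos, one_lt_exp_iff.2 hL, logCutoff L, contDiffOn_logCutoff L,
    fun ρ _ => logCutoff_mem_Icc L ρ, fun ρ hρ h => logCutoff_eq_one hL hρ h,
    fun ρ _ h => logCutoff_eq_zero hL h, ?_⟩
  rw [integral_deriv_logCutoff_sq_mul hL, div_lt_iff₀ hL, mul_add, mul_div_cancel₀ _ hε.ne']
  linarith
end

section
/- Let κ, s ∈ ℝ with s > 0 and |κ| < 1/2, and let ε ∈ {1,−1}. Then there exist u, w ∈ L²((0,∞)) satisfying ∫₀^∞ u(ρ)·(−φ'(ρ) − κρ^{−1}φ(ρ) + εsρ φ(ρ)) dρ = ∫₀^∞ w(ρ)φ(ρ) dρ for every φ ∈ C_c^∞((0,∞)), such that there is NO sequence (u_n) in C_c^∞((0,∞)) with u_n → u in L²((0,∞)) and u_n' − κρ^{−1}u_n + εsρ u_n → w in L²((0,∞)). (That is, the minimal and maximal closed extensions of the operator d u = u' − κρ^{−1}u + εsρ u with initial domain C_c^∞((0,∞))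 differ.) -/
/-!
The function `u = ρ^κ χ` (with `χ` a cutoff equal to `1` near `0`) and `w = d u` satisfy the
weak equation by integration by parts. The partner `v = ρ^(-κ) χ` and `δ v` are in `L²` too,
because `|κ| < 1/2`. Green's formula `∫ (d f) g - ∫ f (δ g) = ∫ (f g)'` gives `⟨d uₙ, v⟩ = ⟨uₙ, δ v⟩` for test functions `uₙ`, which
would pass to the limit `⟨w, v⟩ = ⟨u, δ v⟩`; but `u v = χ²` on `(0,∞)`, so the boundary term
at `0` is `⟨w, v⟩ - ⟨u, δ v⟩ = -χ(0)² = -1`.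
-/

open MeasureTheory Set Filter

def IsTestOnIoi (φ : ℝ → ℝ) : Prop :=
  ContDiff ℝ (⊤ : ℕ∞) φ ∧ HasCompactSupport φ ∧ tsupport φ ⊆ Set.Ioi 0

open Topology

section L2

variable {α : Type*} [MeasurableSpace α] {μ : Measure α}

theorem abs_integral_mul_le_sqrt_mul_sqrt {f g : α → ℝ} (hf : MemLp f 2 μ) (hg : MemLp g 2 μ) :
    |∫ x, f x * g x ∂μ| ≤ √(∫ x, f x ^ 2 ∂μ) * √(∫ x, g x ^ 2 ∂μ) := by
  have hsq : ∀ h : α → ℝ, (∫ x, ‖h x‖ ^ (2 : ℝ) ∂μ) ^ (1 / 2 : ℝ) = √(∫ x, h x ^ 2 ∂μ) := by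
    intro h
    simp only [Real.rpow_two, Real.norm_eq_abs, sq_abs, Real.sqrt_eq_rpow, one_div]
  calc |∫ x, f x * g x ∂μ| ≤ ∫ x, ‖f x‖ * ‖g x‖ ∂μ := by
        simpa only [norm_mul, Real.norm_eq_abs] using
          norm_integral_le_integral_norm (μ := μ) (fun x => f x * g x)
    _ ≤ _ := integral_mul_norm_le_Lp_mul_Lq Real.HolderConjugate.two_two
        (by simpa using hf) (by simpa using hg)
    _ = _ := by rw [hsq, hsq]

theorem tendsto_integral_mul_of_tendsto_integral_sq {ι : Type*} {l : Filter ι}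
    {f : ι → α → ℝ} {u g : α → ℝ} (hf : ∀ i, MemLp (f i) 2 μ) (hu : MemLp u 2 μ)
    (hg : MemLp g 2 μ) (hlim : Tendsto (fun i => ∫ x, (f i x - u x) ^ 2 ∂μ) l (𝓝 0)) :
    Tendsto (fun i => ∫ x, f i x * g x ∂μ) l (𝓝 (∫ x, u x * g x ∂μ)) := by
  rw [← tendsto_sub_nhds_zero_iff]
  have hsqrt : Tendsto (fun i => √(∫ x, (f i x - u x) ^ 2 ∂μ) * √(∫ x, g x ^ 2 ∂μ)) l (𝓝 0) := by
    simpa using (Real.continuous_sqrt.tendsto 0 |>.comp hlim).mul_const _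
  refine squeeze_zero_norm (fun i => ?_) hsqrt
  have hfg : Integrable (fun x => f i x * g x) μ := (hf i).integrable_mul hg
  have hug : Integrable (fun x => u x * g x) μ := hu.integrable_mul hg
  rw [Real.norm_eq_abs, ← integral_sub hfg hug]
  simpa only [Pi.sub_apply, sub_mul] using abs_integral_mul_le_sqrt_mul_sqrt ((hf i).sub hu) hg

end L2

theorem ContDiffOn.contDiff_of_tsupport_subset {𝕜 E F : Type*} [NontriviallyNormedField 𝕜]
    [NormedAddCommGroup E] [NormedSpace 𝕜 E] [NormedAddCommGroup F] [NormedSpace 𝕜 F]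
    {n : WithTop ℕ∞} {f : E → F} {U : Set E} (hf : ContDiffOn 𝕜 n f U) (hU : IsOpen U)
    (hts : tsupport f ⊆ U) : ContDiff 𝕜 n f := by
  refine contDiff_iff_contDiffAt.2 fun x => ?_
  by_cases hx : x ∈ tsupport f
  · exact hf.contDiffAt (hU.mem_nhds (hts hx))
  · exact contDiffAt_const.congr_of_eventuallyEq (notMem_tsupport_iff_eventuallyEq.1 hx)

theorem contDiffOn_rpow_const_mul {c : ℝ} {h : ℝ → ℝ} (hh : ContDiff ℝ 1 h) :
    ContDiffOn ℝ 1 (fun x => x ^ c * h x) (Ioi 0) :=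
  (show ContDiffOn ℝ 1 (fun x : ℝ => x ^ c) (Ioi 0) from fun _ hx =>
    (Real.contDiffAt_rpow_const_of_ne (ne_of_gt hx)).contDiffWithinAt).mul hh.contDiffOn

theorem memLp_rpow_const_mul {c : ℝ} (hc : -1 < 2 * c) {h : ℝ → ℝ} (hh : Continuous h)
    (hcs : HasCompactSupport h) :
    MemLp (fun x => x ^ c * h x) 2 (volume.restrict (Ioi 0)) := by
  obtain ⟨R, hR⟩ := hcs.isCompact.bddAbove
  have hmeas : AEStronglyMeasurable (fun x : ℝ => x ^ c * h x) (volume.restrict (Ioi 0)) :=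
    ((measurable_id.pow_const c).mul hh.measurable).aestronglyMeasurable
  rw [memLp_two_iff_integrable_sq hmeas]
  have hIcc : IntegrableOn (fun x : ℝ => x ^ (2 * c) * h x ^ 2) (Icc 0 R) := by
    refine IntegrableOn.mul_continuousOn ?_ (hh.pow 2).continuousOn isCompact_Icc
    rw [integrableOn_Icc_iff_integrableOn_Ioc]
    exact (intervalIntegral.intervalIntegrable_rpow' hc).1
  refine (hIcc.of_forall_sdiff_eq_zero measurableSet_Ioi ?_).congr_fun ?_ measurableSet_Ioi
  · rintro x ⟨hx0, hxR⟩
    have hx : x ∉ tsupport h := fun hx => hxR ⟨le_of_lt hx0, hR hx⟩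
    simp [image_eq_zero_of_notMem_tsupport hx]
  · intro x hx
    dsimp only
    rw [mul_pow, mul_comm 2 c, Real.rpow_mul (le_of_lt hx), Real.rpow_two]

noncomputable def wittenD (κ s ε : ℝ) (f : ℝ → ℝ) (ρ : ℝ) : ℝ :=
  deriv f ρ - κ * ρ⁻¹ * f ρ + ε * s * ρ * f ρ

noncomputable def wittenDelta (κ s ε : ℝ) (f : ℝ → ℝ) (ρ : ℝ) : ℝ :=
  -(deriv f ρ) - κ * ρ⁻¹ * f ρ + ε * s * ρ * f ρ

section Witten

variable {κ s ε : ℝ}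

theorem wittenDelta_eq_neg_wittenD (f : ℝ → ℝ) :
    wittenDelta κ s ε f = -wittenD (-κ) s (-ε) f := by
  funext ρ
  simp only [wittenD, wittenDelta, Pi.neg_apply]
  ring

theorem wittenD_mul_sub_mul_wittenDelta {f g : ℝ → ℝ} {ρ : ℝ} (hf : DifferentiableAt ℝ f ρ)
    (hg : DifferentiableAt ℝ g ρ) :
    wittenD κ s ε f ρ * g ρ - f ρ * wittenDelta κ s ε g ρ = deriv (fun x => f x * g x) ρ := by
  rw [deriv_fun_mul hf hg]
  simp only [wittenD, wittenDelta]
  ring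

theorem wittenD_rpow_mul {h : ℝ → ℝ} {ρ : ℝ} (hρ : 0 < ρ) (hh : DifferentiableAt ℝ h ρ) :
    wittenD κ s ε (fun x => x ^ κ * h x) ρ = ρ ^ κ * (deriv h ρ + ε * s * ρ * h ρ) := by
  have hpow : HasDerivAt (fun x : ℝ => x ^ κ) (κ * ρ ^ (κ - 1)) ρ :=
    Real.hasDerivAt_rpow_const (Or.inl (ne_of_gt hρ))
  rw [wittenD, (hpow.fun_mul hh.hasDerivAt).deriv, Real.rpow_sub_one (ne_of_gt hρ)]
  field_simp
  ring

theorem support_wittenD_subset (f : ℝ → ℝ) :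
    Function.support (wittenD κ s ε f) ⊆ tsupport f := by
  intro ρ hρ
  by_contra hf
  have hdf : ρ ∉ tsupport (deriv f) := fun h => hf (tsupport_deriv_subset h)
  apply hρ
  simp [wittenD, image_eq_zero_of_notMem_tsupport hf, image_eq_zero_of_notMem_tsupport hdf]

theorem memLp_wittenD_rpow_mul (hκ : -1 < 2 * κ) {h : ℝ → ℝ} (hh : ContDiff ℝ 1 h)
    (hcs : HasCompactSupport h) :
    MemLp (wittenD κ s ε (fun x => x ^ κ * h x)) 2 (volume.restrict (Ioi 0)) := by
  have hcont : Continuous fun x => deriv h x + ε * s * x * h x := by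
    have := hh.continuous_deriv le_rfl
    have := hh.continuous
    fun_prop
  refine (memLp_rpow_const_mul hκ hcont (hcs.deriv.add hcs.mul_left)).ae_eq ?_
  filter_upwards [ae_restrict_mem measurableSet_Ioi] with x hx
  exact (wittenD_rpow_mul hx (hh.differentiable one_ne_zero x)).symm

theorem integral_wittenD_mul_sub_integral_mul_wittenDelta {f g : ℝ → ℝ}
    (hf : ContDiffOn ℝ 1 f (Ioi 0)) (hg : ContDiffOn ℝ 1 g (Ioi 0))
    (hdf : IntegrableOn (fun x => wittenD κ s ε f x * g x) (Ioi 0))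
    (hδg : IntegrableOn (fun x => f x * wittenDelta κ s ε g x) (Ioi 0)) :
    (∫ x in Ioi 0, wittenD κ s ε f x * g x) - ∫ x in Ioi 0, f x * wittenDelta κ s ε g x =
      ∫ x in Ioi 0, deriv (fun x => f x * g x) x := by
  rw [← integral_sub hdf hδg]
  refine setIntegral_congr_fun measurableSet_Ioi fun x hx => ?_
  have hx : Ioi (0 : ℝ) ∈ 𝓝 x := Ioi_mem_nhds hx
  exact wittenD_mul_sub_mul_wittenDelta ((hf.contDiffAt hx).differentiableAt one_ne_zero)
    ((hg.contDiffAt hx).differentiableAt one_ne_zero)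

theorem integral_wittenD_mul_eq_of_hasCompactSupport {f g : ℝ → ℝ}
    (hf : ContDiffOn ℝ 1 f (Ioi 0)) (hg : ContDiffOn ℝ 1 g (Ioi 0))
    (hcs : HasCompactSupport (fun x => f x * g x)) (hts : tsupport (fun x => f x * g x) ⊆ Ioi 0)
    (hdf : IntegrableOn (fun x => wittenD κ s ε f x * g x) (Ioi 0))
    (hδg : IntegrableOn (fun x => f x * wittenDelta κ s ε g x) (Ioi 0)) :
    ∫ x in Ioi 0, wittenD κ s ε f x * g x = ∫ x in Ioi 0, f x * wittenDelta κ s ε g x := by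
  have hfg : ContDiff ℝ 1 (fun x => f x * g x) :=
    (hf.mul hg).contDiff_of_tsupport_subset isOpen_Ioi hts
  rw [← sub_eq_zero, integral_wittenD_mul_sub_integral_mul_wittenDelta hf hg hdf hδg,
    hcs.integral_Ioi_deriv_eq hfg 0, neg_eq_zero]
  exact image_eq_zero_of_notMem_tsupport (f := fun x => f x * g x)
    fun h0 => lt_irrefl (0 : ℝ) (hts h0)

theorem integral_wittenD_rpow_mul_sub_integral_mul_wittenDelta {h : ℝ → ℝ} (hh : ContDiff ℝ 1 h)
    (hcs : HasCompactSupport h)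
    (hdf : IntegrableOn
      (fun x => wittenD κ s ε (fun x => x ^ κ * h x) x * (x ^ (-κ) * h x)) (Ioi 0))
    (hδg : IntegrableOn
      (fun x => x ^ κ * h x * wittenDelta κ s ε (fun x => x ^ (-κ) * h x) x) (Ioi 0)) :
    (∫ x in Ioi 0, wittenD κ s ε (fun x => x ^ κ * h x) x * (x ^ (-κ) * h x)) -
      ∫ x in Ioi 0, x ^ κ * h x * wittenDelta κ s ε (fun x => x ^ (-κ) * h x) x = -h 0 ^ 2 := by
  rw [integral_wittenD_mul_sub_integral_mul_wittenDelta (contDiffOn_rpow_const_mul hh)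
    (contDiffOn_rpow_const_mul hh) hdf hδg, ← HasCompactSupport.integral_Ioi_deriv_eq (hh.pow 2)
    (hcs.mono' fun x hx => subset_tsupport h (pow_ne_zero_iff two_ne_zero |>.1 hx)) 0]
  refine setIntegral_congr_fun measurableSet_Ioi fun x hx => EventuallyEq.deriv_eq ?_
  filter_upwards [Ioi_mem_nhds hx] with y hy
  have hyκ : y ^ κ ≠ 0 := (Real.rpow_pos_of_pos hy κ).ne'
  rw [Real.rpow_neg (le_of_lt hy)]
  field_simp

end Witten

section TestFunction

variable {φ : ℝ → ℝ}

theorem IsTestOnIoi.contDiffOn (hφ : IsTestOnIoi φ) : ContDiffOn ℝ 1 φ (Ioi 0) :=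
  (hφ.1.of_le (by exact_mod_cast le_top)).contDiffOn

theorem IsTestOnIoi.memLp (hφ : IsTestOnIoi φ) : MemLp φ 2 (volume.restrict (Ioi 0)) :=
  (hφ.1.continuous.memLp_of_hasCompactSupport hφ.2.1).restrict _

theorem IsTestOnIoi.memLp_wittenD (hφ : IsTestOnIoi φ) (κ s ε : ℝ) :
    MemLp (wittenD κ s ε φ) 2 (volume.restrict (Ioi 0)) := by
  obtain ⟨hsmooth, hcs, hts⟩ := hφ
  have hcont : ContinuousOn (wittenD κ s ε φ) (Ioi 0) := by
    have := hsmooth.continuous_deriv (by simp)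
    have := hsmooth.continuous
    unfold wittenD
    fun_prop (disch := exact fun x hx => ne_of_gt hx)
  have hts' : tsupport (wittenD κ s ε φ) ⊆ Ioi 0 :=
    (closure_minimal (support_wittenD_subset φ) (isClosed_tsupport φ)).trans hts
  exact ((hcont.continuous_of_tsupport_subset isOpen_Ioi hts').memLp_of_hasCompactSupport
    (hcs.mono' (support_wittenD_subset φ))).restrict _

theorem IsTestOnIoi.memLp_wittenDelta (hφ : IsTestOnIoi φ) (κ s ε : ℝ) :
    MemLp (wittenDelta κ s ε φ) 2 (volume.restrict (Ioi 0)) := by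
  rw [wittenDelta_eq_neg_wittenD]
  exact (hφ.memLp_wittenD _ _ _).neg

theorem IsTestOnIoi.integral_wittenD_mul_eq {κ s ε : ℝ} (hφ : IsTestOnIoi φ) {g : ℝ → ℝ}
    (hg : ContDiffOn ℝ 1 g (Ioi 0)) (hg₂ : MemLp g 2 (volume.restrict (Ioi 0)))
    (hδg : MemLp (wittenDelta κ s ε g) 2 (volume.restrict (Ioi 0))) :
    ∫ x in Ioi 0, wittenD κ s ε φ x * g x = ∫ x in Ioi 0, φ x * wittenDelta κ s ε g x :=
  integral_wittenD_mul_eq_of_hasCompactSupport hφ.contDiffOn hg hφ.2.1.mul_right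
    (tsupport_mul_subset_left.trans hφ.2.2) ((hφ.memLp_wittenD κ s ε).integrable_mul hg₂)
    (hφ.memLp.integrable_mul hδg)

theorem IsTestOnIoi.integral_mul_wittenDelta_eq {κ s ε : ℝ} (hφ : IsTestOnIoi φ) {f : ℝ → ℝ}
    (hf : ContDiffOn ℝ 1 f (Ioi 0)) (hf₂ : MemLp f 2 (volume.restrict (Ioi 0)))
    (hdf : MemLp (wittenD κ s ε f) 2 (volume.restrict (Ioi 0))) :
    ∫ x in Ioi 0, f x * wittenDelta κ s ε φ x = ∫ x in Ioi 0, wittenD κ s ε f x * φ x :=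
  (integral_wittenD_mul_eq_of_hasCompactSupport hf hφ.contDiffOn hφ.2.1.mul_left
    (tsupport_mul_subset_right.trans hφ.2.2) (hdf.integrable_mul hφ.memLp)
    (hf₂.integrable_mul (hφ.memLp_wittenDelta κ s ε))).symm

end TestFunction

theorem statement14_general (κ s ε : ℝ) (hκ : |κ| < 1/2) :
    ∃ u w : ℝ → ℝ,
      MemLp u 2 (volume.restrict (Set.Ioi 0)) ∧
      MemLp w 2 (volume.restrict (Set.Ioi 0)) ∧
      (∀ φ : ℝ → ℝ, IsTestOnIoi φ →
        ∫ ρ in Set.Ioi (0:ℝ),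
            u ρ * (-(deriv φ ρ) - κ * ρ⁻¹ * φ ρ + ε * s * ρ * φ ρ) =
        ∫ ρ in Set.Ioi (0:ℝ), w ρ * φ ρ) ∧
      ¬ ∃ un : ℕ → ℝ → ℝ, (∀ n, IsTestOnIoi (un n)) ∧
        Tendsto (fun n => ∫ ρ in Set.Ioi (0:ℝ), (un n ρ - u ρ) ^ 2) atTop (nhds 0) ∧
        Tendsto (fun n => ∫ ρ in Set.Ioi (0:ℝ),
            (deriv (un n) ρ - κ * ρ⁻¹ * un n ρ + ε * s * ρ * un n ρ - w ρ) ^ 2)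
          atTop (nhds 0) := by
  obtain ⟨hκ₁, hκ₂⟩ := abs_lt.1 hκ
  let χ : ContDiffBump (0 : ℝ) := ⟨1, 2, one_pos, one_lt_two⟩
  have hχ : ContDiff ℝ 1 χ := χ.contDiff
  set u : ℝ → ℝ := fun x => x ^ κ * χ x
  set v : ℝ → ℝ := fun x => x ^ (-κ) * χ x
  have hu : MemLp u 2 (volume.restrict (Ioi 0)) :=
    memLp_rpow_const_mul (by linarith) χ.continuous χ.hasCompactSupport
  have hv : MemLp v 2 (volume.restrict (Ioi 0)) :=
    memLp_rpow_const_mul (by linarith) χ.continuous χ.hasCompactSupport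
  have hdu : MemLp (wittenD κ s ε u) 2 (volume.restrict (Ioi 0)) :=
    memLp_wittenD_rpow_mul (by linarith) hχ χ.hasCompactSupport
  have hδv : MemLp (wittenDelta κ s ε v) 2 (volume.restrict (Ioi 0)) := by
    rw [wittenDelta_eq_neg_wittenD]
    exact (memLp_wittenD_rpow_mul (by linarith) hχ χ.hasCompactSupport).neg
  refine ⟨u, wittenD κ s ε u, hu, hdu,
    fun φ hφ => hφ.integral_mul_wittenDelta_eq (contDiffOn_rpow_const_mul hχ) hu hdu, ?_⟩
  rintro ⟨un, hun, hlim, hdlim⟩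
  have hpair : ∫ x in Ioi 0, wittenD κ s ε u x * v x = ∫ x in Ioi 0, u x * wittenDelta κ s ε v x :=
    tendsto_nhds_unique
      ((tendsto_integral_mul_of_tendsto_integral_sq (f := fun n => wittenD κ s ε (un n))
        (fun n => (hun n).memLp_wittenD κ s ε) hdu hv hdlim).congr fun n =>
          (hun n).integral_wittenD_mul_eq (contDiffOn_rpow_const_mul hχ) hv hδv)
      (tendsto_integral_mul_of_tendsto_integral_sq (fun n => (hun n).memLp) hu hδv hlim)
  have hdefect := integral_wittenD_rpow_mul_sub_integral_mul_wittenDelta hχ χ.hasCompactSupport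
    (hdu.integrable_mul hv) (hu.integrable_mul hδv)
  rw [hpair, sub_self, χ.one_of_mem_closedBall (Metric.mem_closedBall_self χ.rIn_pos.le)] at hdefect
  norm_num at hdefect

/-- For `|κ| < 1/2`, `s > 0`, `ε = ±1`, the minimal and maximal closed
extensions of `d u = u' - κρ⁻¹u + εsρu` with initial domain `C_c^∞((0,∞))` differ: there are
`u, w ∈ L²((0,∞))` satisfying the weak equation `∫ u·δφ = ∫ w·φ` for all test functions `φ`,
such that no sequence of test functions `uₙ` satisfies `uₙ → u` and `d uₙ → w` in `L²`. -/
theorem statement14 (κ s ε : ℝ) (hs : 0 < s) (hκ : |κ| < 1/2) (hε : ε = 1 ∨ ε = -1) :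
    ∃ u w : ℝ → ℝ,
      MemLp u 2 (volume.restrict (Set.Ioi 0)) ∧
      MemLp w 2 (volume.restrict (Set.Ioi 0)) ∧
      (∀ φ : ℝ → ℝ, IsTestOnIoi φ →
        ∫ ρ in Set.Ioi (0:ℝ),
            u ρ * (-(deriv φ ρ) - κ * ρ⁻¹ * φ ρ + ε * s * ρ * φ ρ) =
        ∫ ρ in Set.Ioi (0:ℝ), w ρ * φ ρ) ∧
      ¬ ∃ un : ℕ → ℝ → ℝ, (∀ n, IsTestOnIoi (un n)) ∧
        Tendsto (fun n => ∫ ρ in Set.Ioi (0:ℝ), (un n ρ - u ρ) ^ 2) atTop (nhds 0) ∧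
        Tendsto (fun n => ∫ ρ in Set.Ioi (0:ℝ),
            (deriv (un n) ρ - κ * ρ⁻¹ * un n ρ + ε * s * ρ * un n ρ - w ρ) ^ 2)
          atTop (nhds 0) :=
  statement14_general κ s ε hκ
end
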